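/- arXiv:1311.3473 — 5 statements merged into one kernel-verified Lean document; each statement's English description precedes it below -/
import Mathlib

section
/- Let H = (s_{i+j})_{i,j∈ℕ} be a Hankel moment matrix (so the s_n are real, s_n = ∫ x^n dμ for a positive measure μ on ℝ, and H is Hermitian positive definite) such that lim_{n→∞} λ_n > 0. Then Σ_{n=0}^∞ s_n² = ∞; in particular H does not define a linear mapping from c₀₀ into ℓ² by matrix multiplication. -/
open MeasureTheory Filter Matrix
open scoped ComplexOrder Topology

noncomputable section

/-- The `(n+1) × (n+1)` leading principal truncation of an infinite matrix. -/
def trunc (M : ℕ → ℕ → ℂ) (n : ℕ) : Matrix (Fin (n + 1)) (Fin (n + 1)) ℂ :=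
  Matrix.of fun i j => M i j

/-- An infinite matrix is Hermitian positive definite (HPD) if every leading principal
truncation is positive definite (equivalently, it is Hermitian and all leading
principal minors are positive). -/
def IsHPD (M : ℕ → ℕ → ℂ) : Prop := ∀ n, (trunc M n).PosDef

/-- The smallest eigenvalue of the truncation `M_n`, as the minimum of the Rayleigh
quotient `v M_n v^* / (v v^*)` over nonzero `v ∈ ℂ^{n+1}`. -/
def smallestEig (M : ℕ → ℕ → ℂ) (n : ℕ) : ℝ :=
  ⨅ v : {v : Fin (n + 1) → ℂ // v ≠ 0},
    (∑ i : Fin (n + 1), ∑ j : Fin (n + 1), v.1 i * M i j * (starRingEnd ℂ) (v.1 j)).re / ∑ i, Complex.normSq (v.1 i)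

/-- `B` is the transition matrix of `M`: upper triangular, positive diagonal,
with `B_nᵗ M_n conj(B_n) = I` for all `n`. -/
def IsTransition (M B : ℕ → ℕ → ℂ) : Prop :=
  (∀ k n, n < k → B k n = 0) ∧
  (∀ n, 0 < (B n n).re ∧ (B n n).im = 0) ∧
  (∀ n, (trunc B n)ᵀ * trunc M n * (trunc B n).map (starRingEnd ℂ) = 1)

/-- Operator norm of a finite matrix acting on the Euclidean space `ℂ^n`. -/
def opNorm {n : ℕ} (A : Matrix (Fin n) (Fin n) ℂ) : ℝ :=
  ‖LinearMap.toContinuousLinearMap (Matrix.toEuclideanLin A)‖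

/-!
The Rayleigh quotient of `H_n` at the last unit vector `e_n` is `s_{2n}`, so `λ_n ≤ s_{2n}`.
If `lim λ_n > 0`, the even moments stay bounded away from `0`, hence `s_n ↛ 0` and `Σ s_n²`
diverges. The column `H e_0` is `(s_n)_n`, which is therefore not in `ℓ²`.
-/

lemma sum_mul_trunc_mul_conj (M : ℕ → ℕ → ℂ) (n : ℕ) (v : Fin (n + 1) → ℂ) :
    ∑ i : Fin (n + 1), ∑ j : Fin (n + 1), v i * M i j * (starRingEnd ℂ) (v j)
      = v ⬝ᵥ trunc M n *ᵥ star v := by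
  simp [dotProduct, Matrix.mulVec, trunc, Finset.mul_sum, mul_assoc]

lemma re_sum_mul_trunc_mul_conj_nonneg {M : ℕ → ℕ → ℂ} {n : ℕ} (hM : (trunc M n).PosSemidef)
    (v : Fin (n + 1) → ℂ) :
    0 ≤ (∑ i : Fin (n + 1), ∑ j : Fin (n + 1), v i * M i j * (starRingEnd ℂ) (v j)).re := by
  have := hM.dotProduct_mulVec_nonneg (star v)
  rw [star_star, ← sum_mul_trunc_mul_conj] at this
  exact (Complex.nonneg_iff.mp this).1

lemma smallestEig_le_re_diag {M : ℕ → ℕ → ℂ} {n : ℕ} (hM : (trunc M n).PosSemidef)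
    (k : Fin (n + 1)) : smallestEig M n ≤ (M k k).re := by
  have hbdd : BddBelow (Set.range fun v : {v : Fin (n + 1) → ℂ // v ≠ 0} =>
      (∑ i : Fin (n + 1), ∑ j : Fin (n + 1), v.1 i * M i j * (starRingEnd ℂ) (v.1 j)).re
        / ∑ i, Complex.normSq (v.1 i)) :=
    ⟨0, Set.forall_mem_range.mpr fun v => div_nonneg (re_sum_mul_trunc_mul_conj_nonneg hM v)
      (Finset.sum_nonneg fun i _ => Complex.normSq_nonneg _)⟩
  calc smallestEig M n ≤ _ := ciInf_le hbdd ⟨Pi.single k 1, by simp⟩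
    _ = (M k k).re := by simp [Pi.single_apply]

lemma not_summable_of_frequently_le {f : ℕ → ℝ} {c : ℝ} (hc : 0 < c)
    (h : ∃ᶠ n in atTop, c ≤ f n) : ¬ Summable f := fun hf =>
  h ((hf.tendsto_atTop_zero.eventually (gt_mem_nhds hc)).mono fun _ => not_le.mpr)

theorem stmt4_general (s : ℕ → ℝ)
    (hHPD : IsHPD fun i j => (s (i + j) : ℂ))
    (lam : ℝ) (hlam : Tendsto (smallestEig fun i j => (s (i + j) : ℂ)) atTop (𝓝 lam))
    (hpos : 0 < lam) :
    ¬ Summable (fun n => s n ^ 2) ∧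
    ∃ v : ℕ → ℂ, v.support.Finite ∧
      ¬ Summable fun i => ‖∑ᶠ j, (s (i + j) : ℂ) * v j‖ ^ 2 := by
  have hdiag : ∀ n, smallestEig (fun i j => (s (i + j) : ℂ)) n ≤ s (2 * n) := fun n => by
    simpa [two_mul] using smallestEig_le_re_diag (hHPD n).posSemidef (Fin.last n)
  have hfreq : ∃ᶠ n in atTop, lam ^ 2 / 4 ≤ s n ^ 2 :=
    Tendsto.frequently_map (fun n => 2 * n) (tendsto_id.const_mul_atTop' two_pos)
      (fun n hn => by nlinarith [hdiag n])
      (hlam.eventually (eventually_gt_nhds (half_lt_self hpos))).frequently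
  have hdiverge := not_summable_of_frequently_le (by positivity) hfreq
  let e₀ : ℕ → ℂ := Pi.single 0 1
  have hcolumn : ∀ i, ∑ᶠ j, (s (i + j) : ℂ) * e₀ j = s i := fun i => by
    rw [finsum_eq_single _ 0 fun j hj => by simp [e₀, hj]]
    simp [e₀]
  refine ⟨hdiverge, e₀, (Set.finite_singleton 0).subset Pi.support_single_subset, ?_⟩
  simpa [hcolumn, Complex.norm_real] using hdiverge

/-- for a Hankel moment matrix `H = (s_{i+j})` with `lim λ_n > 0`,
the series `Σ s_n²` diverges; in particular `H` does not map the finitely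
supported sequences into `ℓ²`. -/
theorem stmt4 (μ : Measure ℝ) (s : ℕ → ℝ)
    (hint : ∀ n : ℕ, Integrable (fun x => x ^ n) μ)
    (hs : ∀ n : ℕ, s n = ∫ x, x ^ n ∂μ)
    (hHPD : IsHPD fun i j => (s (i + j) : ℂ))
    (lam : ℝ) (hlam : Tendsto (smallestEig fun i j => (s (i + j) : ℂ)) atTop (𝓝 lam))
    (hpos : 0 < lam) :
    ¬ Summable (fun n => s n ^ 2) ∧
    ∃ v : ℕ → ℂ, v.support.Finite ∧
      ¬ Summable fun i => ‖∑ᶠ j, (s (i + j) : ℂ) * v j‖ ^ 2 :=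
  stmt4_general s hHPD lam hlam hpos
end
end

section
/- Let T = (c_{j-i})_{i,j∈ℕ} be an infinite Hermitian positive definite Toeplitz matrix with lim_{n→∞} λ_n > 0. If Σ_{n=0}^∞ |c_n|² < ∞, then the matrix A = conj(B) B^t (where B is the transition matrix of T) exists and satisfies A T = T A = I, with all matrix products defined entrywise by convergent series. -/
open MeasureTheory Filter Matrix
open scoped ComplexOrder Topology

noncomputable section

/-- The infinite Toeplitz matrix `(c_{j-i})_{i,j}`. -/
def Toep (c : ℤ → ℂ) : ℕ → ℕ → ℂ := fun i j => c ((j : ℤ) - (i : ℤ))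

/-!
`A_n = conj(B_n) B_nᵀ` is the inverse of `T_n`. If `v` is its `i`-th row, then
`v T_n v* = conj (A_n)ᵢᵢ`, so `λ ‖v‖² ≤ Re (A_n)ᵢᵢ ≤ ‖v‖`: the rows of `A_n` lie in the
`ℓ²`-ball of radius `1/λ` for every `n`. As `(A_n)ᵢᵢ = Σ_{l ≤ n} |b_{i,l}|²`, the rows of `B`
are square summable, so `A_n → A` entrywise. In `Σ_{k ≤ n} (A_n)ᵢₖ t_{kj} = δᵢⱼ` the terms with
`k ≥ m` are bounded, by Cauchy–Schwarz, by `λ⁻¹ (Σ_{k ≥ m} |t_{kj}|²)^{1/2}` uniformly in `n`,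
since the columns of `T` are square summable; letting `n → ∞` and then `m → ∞` gives `A T = I`,
and `T A = I` in the same way.
-/

open Finset ComplexConjugate

lemma summable_norm_mul_of_summable_sq {ι R : Type*} [NormedRing R] {f g : ι → R}
    (hf : Summable fun k => ‖f k‖ ^ 2) (hg : Summable fun k => ‖g k‖ ^ 2) :
    Summable fun k => ‖f k * g k‖ :=
  .of_nonneg_of_le (fun _ => norm_nonneg _)
    (fun k => (norm_mul_le _ _).trans (by nlinarith [sq_nonneg (‖f k‖ - ‖g k‖)]))
    ((hf.add hg).div_const 2)

lemma summable_of_sum_range_succ_le {f : ℕ → ℝ} {C : ℝ} {N : ℕ} (hf : ∀ k, 0 ≤ f k)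
    (h : ∀ n ≥ N, ∑ k ∈ range (n + 1), f k ≤ C) : Summable f :=
  summable_of_sum_range_le hf fun m =>
    (sum_le_sum_of_subset_of_nonneg (range_subset_range.mpr (by omega))
      fun _ _ _ => hf _).trans (h (max N m) (le_max_left _ _))

lemma norm_sum_mul_le_sqrt_mul_sqrt {ι : Type*} (s : Finset ι) (f g : ι → ℂ) :
    ‖∑ i ∈ s, f i * g i‖ ≤ √(∑ i ∈ s, ‖f i‖ ^ 2) * √(∑ i ∈ s, ‖g i‖ ^ 2) :=
  (norm_sum_le _ _).trans <| (sum_le_sum fun _ _ => norm_mul_le _ _).trans <|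
    Real.sum_mul_le_sqrt_mul_sqrt _ _ _

lemma sum_Ico_le_tsum_nat_add {f : ℕ → ℝ} (hf : ∀ k, 0 ≤ f k) (hs : Summable f) (m n : ℕ) :
    ∑ k ∈ Ico m n, f k ≤ ∑' k, f (k + m) := by
  rw [sum_Ico_eq_sum_range]
  simp_rw [add_comm m]
  exact ((summable_nat_add_iff m).mpr hs).sum_le_tsum _ fun _ _ => hf _

lemma summable_norm_sq_of_tendsto {ψ : ℕ → ℂ} {ψn : ℕ → ℕ → ℂ} {C : ℝ} {N : ℕ}
    (hten : ∀ k, Tendsto (fun n => ψn n k) atTop (𝓝 (ψ k)))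
    (hbd : ∀ n ≥ N, ∑ k ∈ range (n + 1), ‖ψn n k‖ ^ 2 ≤ C) :
    Summable fun k => ‖ψ k‖ ^ 2 := by
  refine summable_of_sum_range_le (c := C) (fun _ => sq_nonneg _) fun m => ?_
  refine le_of_tendsto (tendsto_finsetSum _ fun k _ => (hten k).norm.pow 2)
    (eventually_atTop.mpr ⟨max N m, fun n hn => ?_⟩)
  exact (sum_le_sum_of_subset_of_nonneg (range_subset_range.mpr (by omega))
    fun _ _ _ => sq_nonneg _).trans (hbd n (le_of_max_le_left hn))

theorem hasSum_mul_of_tendsto {φ ψ : ℕ → ℂ} {ψn : ℕ → ℕ → ℂ} {δ : ℂ} {C : ℝ} {N : ℕ}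
    (hten : ∀ k, Tendsto (fun n => ψn n k) atTop (𝓝 (ψ k)))
    (hid : ∀ n ≥ N, ∑ k ∈ range (n + 1), ψn n k * φ k = δ)
    (hbd : ∀ n ≥ N, ∑ k ∈ range (n + 1), ‖ψn n k‖ ^ 2 ≤ C)
    (hφ : Summable fun k => ‖φ k‖ ^ 2) :
    HasSum (fun k => ψ k * φ k) δ := by
  have hψ := summable_norm_sq_of_tendsto hten hbd
  set tail := fun m => √C * √(∑' k, ‖φ (k + m)‖ ^ 2)
  have htail : ∀ m > N, ∀ n ≥ m, ‖∑ k ∈ range m, ψn n k * φ k - δ‖ ≤ tail m := by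
    intro m hm n hn
    have hsplit := sum_range_add_sum_Ico (fun k => ψn n k * φ k) (show m ≤ n + 1 by omega)
    rw [← hid n (by omega), ← hsplit, sub_add_cancel_left, norm_neg]
    refine (norm_sum_mul_le_sqrt_mul_sqrt _ _ _).trans (mul_le_mul ?_ ?_ (by positivity) ?_)
    · refine Real.sqrt_le_sqrt ((sum_le_sum_of_subset_of_nonneg ?_
        fun _ _ _ => sq_nonneg _).trans (hbd n (by omega)))
      rw [range_eq_Ico]
      exact Ico_subset_Ico_left (Nat.zero_le m)
    · exact Real.sqrt_le_sqrt (sum_Ico_le_tsum_nat_add (fun _ => sq_nonneg _) hφ m (n + 1))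
    · exact Real.sqrt_nonneg _
  have hlim : ∀ m > N, ‖∑ k ∈ range m, ψ k * φ k - δ‖ ≤ tail m := fun m hm =>
    le_of_tendsto ((tendsto_finsetSum _ fun k _ => (hten k).mul_const (φ k)).sub_const δ).norm
      (eventually_atTop.mpr ⟨m, htail m hm⟩)
  have hzero : Tendsto tail atTop (𝓝 0) := by
    simpa using ((tendsto_sum_nat_add fun k => ‖φ k‖ ^ 2).sqrt).const_mul √C
  rw [(summable_norm_mul_of_summable_sq hψ hφ).of_norm.hasSum_iff_tendsto_nat,
    ← tendsto_sub_nhds_zero_iff, tendsto_zero_iff_norm_tendsto_zero]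
  exact squeeze_zero' (.of_forall fun _ => norm_nonneg _)
    (eventually_atTop.mpr ⟨N + 1, hlim⟩) hzero

namespace InfiniteMatrix

def quadForm (M : ℕ → ℕ → ℂ) (n : ℕ) (v : Fin (n + 1) → ℂ) : ℂ :=
  ∑ i : Fin (n + 1), ∑ j : Fin (n + 1), v i * M i j * conj (v j)

lemma quadForm_eq_sum_range (M : ℕ → ℕ → ℂ) (n : ℕ) (f : ℕ → ℂ) :
    quadForm M n (fun k => f k) =
      ∑ a ∈ range (n + 1), ∑ b ∈ range (n + 1), f a * M a b * conj (f b) := by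
  rw [quadForm, ← Fin.sum_univ_eq_sum_range]
  exact sum_congr rfl fun a _ =>
    Fin.sum_univ_eq_sum_range (fun b => f a * M a b * conj (f b)) _

lemma sum_normSq_eq_sum_range (n : ℕ) (f : ℕ → ℂ) :
    ∑ i : Fin (n + 1), Complex.normSq (f i) = ∑ k ∈ range (n + 1), ‖f k‖ ^ 2 := by
  simp only [Complex.normSq_eq_norm_sq, Fin.sum_univ_eq_sum_range (fun k => ‖f k‖ ^ 2)]

lemma quadForm_snoc_zero (M : ℕ → ℕ → ℂ) (n : ℕ) (v : Fin (n + 1) → ℂ) :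
    quadForm M (n + 1) (Fin.snoc v 0) = quadForm M n v := by
  simp [quadForm, Fin.sum_univ_castSucc]

instance (n : ℕ) : Nonempty {v : Fin (n + 1) → ℂ // v ≠ 0} :=
  ⟨⟨1, one_ne_zero⟩⟩

section Rayleigh

variable {M : ℕ → ℕ → ℂ}

lemma quadForm_re_pos (hM : IsHPD M) {n : ℕ} {v : Fin (n + 1) → ℂ} (hv : v ≠ 0) :
    0 < (quadForm M n v).re := by
  have h := (hM n).dotProduct_mulVec_pos (star_ne_zero.mpr hv)
  have h' : star (star v) ⬝ᵥ trunc M n *ᵥ star v = quadForm M n v := by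
    simp [dotProduct, mulVec, quadForm, trunc, Finset.mul_sum, mul_assoc]
  exact (Complex.lt_def.mp (h' ▸ h)).1

lemma smallestEig_bddBelow (hM : IsHPD M) (n : ℕ) :
    BddBelow (Set.range fun v : {v : Fin (n + 1) → ℂ // v ≠ 0} =>
      (quadForm M n v.1).re / ∑ i, Complex.normSq (v.1 i)) :=
  ⟨0, by
    rintro _ ⟨v, rfl⟩
    exact div_nonneg (quadForm_re_pos hM v.2).le
      (sum_nonneg fun _ _ => Complex.normSq_nonneg _)⟩

lemma smallestEig_le (hM : IsHPD M) {n : ℕ} {v : Fin (n + 1) → ℂ} (hv : v ≠ 0) :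
    smallestEig M n ≤ (quadForm M n v).re / ∑ i, Complex.normSq (v i) :=
  ciInf_le (smallestEig_bddBelow hM n) ⟨v, hv⟩

lemma smallestEig_antitone (hM : IsHPD M) : Antitone (smallestEig M) := by
  refine antitone_nat_of_succ_le fun n => le_ciInf fun ⟨v, hv⟩ => ?_
  have hw : (Fin.snoc v 0 : Fin (n + 2) → ℂ) ≠ 0 := fun h =>
    hv (funext fun k => by simpa using congrFun h k.castSucc)
  calc smallestEig M (n + 1) ≤ _ := smallestEig_le hM hw
    _ = _ := by
      rw [quadForm_snoc_zero, Fin.sum_univ_castSucc]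
      simp only [Fin.snoc_castSucc, Fin.snoc_last, map_zero, add_zero]
      rfl

lemma le_smallestEig_of_tendsto (hM : IsHPD M) {lam : ℝ}
    (hlam : Tendsto (smallestEig M) atTop (𝓝 lam)) (n : ℕ) : lam ≤ smallestEig M n :=
  (smallestEig_antitone hM).le_of_tendsto hlam n

lemma mul_sum_normSq_le_quadForm (hM : IsHPD M) {n : ℕ} {lam : ℝ}
    (hlam : lam ≤ smallestEig M n) (v : Fin (n + 1) → ℂ) :
    lam * ∑ i, Complex.normSq (v i) ≤ (quadForm M n v).re := by
  rcases eq_or_ne v 0 with rfl | hv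
  · simp [quadForm]
  have hden : 0 < ∑ i, Complex.normSq (v i) := by
    obtain ⟨a, ha⟩ := Function.ne_iff.mp hv
    exact sum_pos' (fun _ _ => Complex.normSq_nonneg _)
      ⟨a, mem_univ a, Complex.normSq_pos.mpr ha⟩
  exact (le_div_iff₀ hden).mp (hlam.trans (smallestEig_le hM hv))

end Rayleigh

lemma trunc_mul_apply (X Y : ℕ → ℕ → ℂ) (n : ℕ) (i j : Fin (n + 1)) :
    (trunc X n * trunc Y n) i j = ∑ k ∈ range (n + 1), X i k * Y k j := by
  rw [mul_apply, ← Fin.sum_univ_eq_sum_range (fun k => X i k * Y k j)]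
  rfl

lemma sum_range_mul_eq_ite {X Y : ℕ → ℕ → ℂ} {n : ℕ} (h : trunc X n * trunc Y n = 1)
    {i j : ℕ} (hi : i ≤ n) (hj : j ≤ n) :
    ∑ k ∈ range (n + 1), X i k * Y k j = if i = j then 1 else 0 := by
  have := congrFun (congrFun h ⟨i, Nat.lt_succ_of_le hi⟩) ⟨j, Nat.lt_succ_of_le hj⟩
  simpa [trunc_mul_apply, one_apply] using this

/-- `rowGram B n` is the matrix `A_n = conj(B_n) B_nᵀ`, whose entrywise limit is `A`. -/
def rowGram (B : ℕ → ℕ → ℂ) (n i j : ℕ) : ℂ :=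
  ∑ l ∈ range (n + 1), conj (B i l) * B j l

lemma rowGram_swap (B : ℕ → ℕ → ℂ) (n i j : ℕ) :
    rowGram B n j i = conj (rowGram B n i j) := by
  simp [rowGram, map_sum, mul_comm]

lemma rowGram_self (B : ℕ → ℕ → ℂ) (n i : ℕ) :
    rowGram B n i i = ((∑ l ∈ range (n + 1), ‖B i l‖ ^ 2 : ℝ) : ℂ) := by
  simp [rowGram, Complex.conj_mul']

lemma trunc_rowGram (B : ℕ → ℕ → ℂ) (n : ℕ) :
    trunc (rowGram B n) n = (trunc B n).map conj * (trunc B n)ᵀ := by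
  ext i j
  rw [mul_apply]
  exact (Fin.sum_univ_eq_sum_range (fun l => conj (B i l) * B j l) _).symm

lemma re_rowGram_sq_le (B : ℕ → ℕ → ℂ) {n i : ℕ} (hi : i ≤ n) :
    (rowGram B n i i).re ^ 2 ≤ ∑ k ∈ range (n + 1), ‖rowGram B n i k‖ ^ 2 :=
  calc (rowGram B n i i).re ^ 2 ≤ ‖rowGram B n i i‖ ^ 2 :=
        sq_le_sq' (neg_le_of_abs_le (Complex.abs_re_le_norm _)) (Complex.re_le_norm _)
    _ ≤ _ := single_le_sum (f := fun k => ‖rowGram B n i k‖ ^ 2) (fun _ _ => sq_nonneg _)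
        (mem_range.mpr (Nat.lt_succ_of_le hi))

section Gram

variable {M B : ℕ → ℕ → ℂ} {n : ℕ}

lemma rowGram_mul_eq_one (hB : (trunc B n)ᵀ * trunc M n * (trunc B n).map conj = 1) :
    trunc (rowGram B n) n * trunc M n = 1 := by
  rw [trunc_rowGram, Matrix.mul_assoc]
  exact mul_eq_one_comm.mp hB

lemma mul_rowGram_eq_one (hB : (trunc B n)ᵀ * trunc M n * (trunc B n).map conj = 1) :
    trunc M n * trunc (rowGram B n) n = 1 :=
  mul_eq_one_comm.mp (rowGram_mul_eq_one hB)

lemma quadForm_rowGram (hB : (trunc B n)ᵀ * trunc M n * (trunc B n).map conj = 1)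
    {i : ℕ} (hi : i ≤ n) :
    quadForm M n (fun k => rowGram B n i k) = conj (rowGram B n i i) := by
  rw [quadForm_eq_sum_range, sum_comm]
  simp_rw [← sum_mul]
  rw [sum_congr rfl fun b hb => by
    rw [sum_range_mul_eq_ite (rowGram_mul_eq_one hB) hi (Nat.le_of_lt_succ (mem_range.mp hb))]]
  simp [Nat.lt_succ_of_le hi]

variable {lam : ℝ}

lemma mul_sum_norm_rowGram_sq_le (hM : IsHPD M)
    (hB : (trunc B n)ᵀ * trunc M n * (trunc B n).map conj = 1) (hlam : lam ≤ smallestEig M n)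
    {i : ℕ} (hi : i ≤ n) :
    lam * ∑ k ∈ range (n + 1), ‖rowGram B n i k‖ ^ 2 ≤ (rowGram B n i i).re := by
  have := mul_sum_normSq_le_quadForm hM hlam (fun k => rowGram B n i k)
  rwa [quadForm_rowGram hB hi, Complex.conj_re, sum_normSq_eq_sum_range] at this

lemma sum_norm_rowGram_sq_le (hM : IsHPD M)
    (hB : (trunc B n)ᵀ * trunc M n * (trunc B n).map conj = 1) (hlam : lam ≤ smallestEig M n)
    (hpos : 0 < lam) {i : ℕ} (hi : i ≤ n) :
    ∑ k ∈ range (n + 1), ‖rowGram B n i k‖ ^ 2 ≤ 1 / lam ^ 2 := by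
  set Q := ∑ k ∈ range (n + 1), ‖rowGram B n i k‖ ^ 2
  have hQ : 0 ≤ Q := sum_nonneg fun _ _ => sq_nonneg _
  have hQQ : (lam * Q) ^ 2 ≤ Q := (pow_le_pow_left₀ (by positivity)
    (mul_sum_norm_rowGram_sq_le hM hB hlam hi) 2).trans (re_rowGram_sq_le B hi)
  rw [le_div_iff₀ (by positivity)]
  rcases hQ.eq_or_lt with hQ0 | hQ0
  · simp [← hQ0]
  · nlinarith

lemma sum_norm_sq_le (hM : IsHPD M)
    (hB : (trunc B n)ᵀ * trunc M n * (trunc B n).map conj = 1) (hlam : lam ≤ smallestEig M n)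
    (hpos : 0 < lam) {i : ℕ} (hi : i ≤ n) :
    ∑ l ∈ range (n + 1), ‖B i l‖ ^ 2 ≤ 1 / lam := by
  have h := (re_rowGram_sq_le B hi).trans (sum_norm_rowGram_sq_le hM hB hlam hpos hi)
  rw [rowGram_self, Complex.ofReal_re, ← _root_.one_div_pow] at h
  exact (abs_le_of_sq_le_sq h (by positivity)).trans' (le_abs_self _)

end Gram

section Inverse

variable {M B : ℕ → ℕ → ℂ} {lam : ℝ}

lemma tendsto_rowGram {i j : ℕ} (hs : Summable fun l => conj (B i l) * B j l) :
    Tendsto (fun n => rowGram B n i j) atTop (𝓝 (∑' l, conj (B i l) * B j l)) :=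
  hs.hasSum.tendsto_sum_nat.comp (tendsto_add_atTop_nat 1)

lemma summable_norm_conj_mul (hM : IsHPD M)
    (hB : ∀ n, (trunc B n)ᵀ * trunc M n * (trunc B n).map conj = 1)
    (hlam : ∀ n, lam ≤ smallestEig M n) (hpos : 0 < lam) (i j : ℕ) :
    Summable fun k => ‖conj (B i k) * B j k‖ := by
  have hrow (i : ℕ) : Summable fun l => ‖B i l‖ ^ 2 :=
    summable_of_sum_range_succ_le (fun _ => sq_nonneg _) fun n hn =>
      sum_norm_sq_le hM (hB n) (hlam n) hpos hn
  exact summable_norm_mul_of_summable_sq (by simpa using hrow i) (hrow j)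

lemma hasSum_tsum_mul (hM : IsHPD M)
    (hB : ∀ n, (trunc B n)ᵀ * trunc M n * (trunc B n).map conj = 1)
    (hlam : ∀ n, lam ≤ smallestEig M n) (hpos : 0 < lam) {j : ℕ}
    (hcol : Summable fun k => ‖M k j‖ ^ 2) (i : ℕ) :
    HasSum (fun k => (∑' l, conj (B i l) * B k l) * M k j) (if i = j then 1 else 0) :=
  hasSum_mul_of_tendsto (N := max i j)
    (fun k => tendsto_rowGram (summable_norm_conj_mul hM hB hlam hpos i k).of_norm)
    (fun n hn => sum_range_mul_eq_ite (rowGram_mul_eq_one (hB n))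
      (le_of_max_le_left hn) (le_of_max_le_right hn))
    (fun n hn => sum_norm_rowGram_sq_le hM (hB n) (hlam n) hpos (le_of_max_le_left hn)) hcol

lemma hasSum_mul_tsum (hM : IsHPD M)
    (hB : ∀ n, (trunc B n)ᵀ * trunc M n * (trunc B n).map conj = 1)
    (hlam : ∀ n, lam ≤ smallestEig M n) (hpos : 0 < lam) {i : ℕ}
    (hrow : Summable fun k => ‖M i k‖ ^ 2) (j : ℕ) :
    HasSum (fun k => M i k * ∑' l, conj (B k l) * B j l) (if i = j then 1 else 0) := by
  simp_rw [mul_comm (M i _)]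
  refine hasSum_mul_of_tendsto (ψn := fun n k => rowGram B n k j) (C := 1 / lam ^ 2) (N := max i j)
    (fun k => tendsto_rowGram (summable_norm_conj_mul hM hB hlam hpos k j).of_norm)
    (fun n hn => ?_) (fun n hn => ?_) hrow
  · simp_rw [mul_comm _ (M i _)]
    exact sum_range_mul_eq_ite (mul_rowGram_eq_one (hB n))
      (le_of_max_le_left hn) (le_of_max_le_right hn)
  · simp only [rowGram_swap B n j, Complex.norm_conj]
    exact sum_norm_rowGram_sq_le hM (hB n) (hlam n) hpos (le_of_max_le_right hn)

end Inverse

end InfiniteMatrix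

section Toeplitz

variable {c : ℤ → ℂ}

lemma toep_swap (hherm : ∀ k : ℤ, c (-k) = conj (c k)) (i j : ℕ) :
    Toep c j i = conj (Toep c i j) := by
  rw [Toep, Toep, ← hherm, neg_sub]

lemma summable_norm_toep_row_sq (hc : Summable fun n : ℕ => ‖c n‖ ^ 2) (i : ℕ) :
    Summable fun k => ‖Toep c i k‖ ^ 2 :=
  (summable_nat_add_iff i).mp (hc.congr fun k => by simp [Toep])

lemma summable_norm_toep_col_sq (hherm : ∀ k : ℤ, c (-k) = conj (c k))
    (hc : Summable fun n : ℕ => ‖c n‖ ^ 2) (j : ℕ) :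
    Summable fun k => ‖Toep c k j‖ ^ 2 := by
  simpa [toep_swap hherm _ j] using summable_norm_toep_row_sq hc j

end Toeplitz

open InfiniteMatrix

/-- for an HPD Toeplitz matrix `T = (c_{j-i})` with `lim λ_n > 0` and
`Σ |c_n|² < ∞`, the matrix `A = conj(B) Bᵗ` exists and `A T = T A = I`. -/
theorem stmt5 (c : ℤ → ℂ) (B : ℕ → ℕ → ℂ)
    (hherm : ∀ k : ℤ, c (-k) = (starRingEnd ℂ) (c k))
    (hHPD : IsHPD (Toep c)) (hB : IsTransition (Toep c) B)
    (lam : ℝ) (hlam : Tendsto (smallestEig (Toep c)) atTop (𝓝 lam)) (hpos : 0 < lam)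
    (hc : Summable fun n : ℕ => ‖c n‖ ^ 2) :
    (∀ i j : ℕ, Summable fun k => ‖(starRingEnd ℂ) (B i k) * B j k‖) ∧
    (∀ i j : ℕ, HasSum (fun k => (∑' l, (starRingEnd ℂ) (B i l) * B k l) * Toep c k j)
      (if i = j then 1 else 0)) ∧
    (∀ i j : ℕ, HasSum (fun k => Toep c i k * (∑' l, (starRingEnd ℂ) (B k l) * B j l))
      (if i = j then 1 else 0)) := by
  obtain ⟨-, -, hBinv⟩ := hB
  have hlam' := le_smallestEig_of_tendsto hHPD hlam
  exact ⟨summable_norm_conj_mul hHPD hBinv hlam' hpos,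
    fun i j => hasSum_tsum_mul hHPD hBinv hlam' hpos (summable_norm_toep_col_sq hherm hc j) i,
    fun i j => hasSum_mul_tsum hHPD hBinv hlam' hpos (summable_norm_toep_row_sq hc i) j⟩
end
end

section
/- Let T be an infinite Hermitian positive definite Toeplitz matrix with transition matrix B = (b_{k,n}), and assume the matrix A = conj(B) B^t exists (i.e. every row of B lies in ℓ²). Then B is a weakly asymptotic Toeplitz matrix: for every k ∈ ℕ the limit β_k = lim_{n→∞} b_{n-k,n} exists; moreover β_0 = √(a_{0,0}) > 0, where a_{0,0} = Σ_{k≥0} |b_{0,k}|². -/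
open MeasureTheory Filter Matrix
open scoped ComplexOrder Topology

noncomputable section

/-!
`A_n := conj(B_n) B_nᵗ` is the inverse of `T_n`, hence Hermitian and, like `T_n`, persymmetric
(invariant under the flip `i ↦ n - i` of both indices combined with transposition). Since `B` is
upper triangular, `a_{n-k,n} = conj(b_{n-k,n}) b_{n,n}`, while the symmetries give
`a_{n-k,n} = a_{0,k} = Σ_{m ≤ n} b_{k,m} conj(b_{0,m})`, a partial sum of a convergent series.
For `k = 0` this yields `b_{n,n}² = Σ_{m ≤ n} |b_{0,m}|² → a_{0,0}`, and dividing by `b_{n,n}`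
gives the limits `β_k` for every `k`.
-/

open Finset

theorem Matrix.inv_submatrix_eq_transpose {R ι : Type*} [CommRing R] [Fintype ι] [DecidableEq ι]
    (e : ι ≃ ι) {T : Matrix ι ι R} (hT : T.submatrix e e = Tᵀ) :
    T⁻¹.submatrix e e = T⁻¹ᵀ := by
  rw [← inv_submatrix_equiv, hT, transpose_nonsing_inv]

lemma trunc_toep_isHermitian {c : ℤ → ℂ} (hherm : ∀ k : ℤ, c (-k) = starRingEnd ℂ (c k))
    (n : ℕ) : (trunc (Toep c) n).IsHermitian := by
  ext i j
  simp only [conjTranspose_apply, trunc, Toep, of_apply]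
  rw [← neg_sub, hherm, Complex.star_def, Complex.conj_conj]

lemma trunc_toep_submatrix_rev (c : ℤ → ℂ) (n : ℕ) :
    (trunc (Toep c) n).submatrix Fin.revPerm Fin.revPerm = (trunc (Toep c) n)ᵀ := by
  ext i j
  simp only [submatrix_apply, transpose_apply, trunc, Toep, of_apply, Fin.revPerm_apply,
    Fin.val_rev]
  congr 1
  omega

lemma summable_mul_conj_of_summable_sq {ι : Type*} {f g : ι → ℂ}
    (hf : Summable fun m => ‖f m‖ ^ 2) (hg : Summable fun m => ‖g m‖ ^ 2) :
    Summable fun m => f m * starRingEnd ℂ (g m) :=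
  (hf.add hg).of_norm_bounded fun m => by
    rw [norm_mul, Complex.norm_conj]
    nlinarith [sq_nonneg (‖f m‖ - ‖g m‖)]

namespace IsTransition

variable {M B : ℕ → ℕ → ℂ}

lemma inv_trunc_eq (hB : IsTransition M B) (n : ℕ) :
    (trunc M n)⁻¹ = (trunc B n).map (starRingEnd ℂ) * (trunc B n)ᵀ := by
  apply inv_eq_left_inv
  rw [Matrix.mul_assoc]
  exact mul_eq_one_comm.mp (hB.2.2 n)

lemma apply_diag_eq_norm (hB : IsTransition M B) (n : ℕ) : B n n = ‖B n n‖ := by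
  have hre : B n n = ((B n n).re : ℂ) := Complex.ext rfl (by simp [(hB.2.1 n).2])
  rw [hre, Complex.norm_of_nonneg (hB.2.1 n).1.le]

lemma apply_diag_ne_zero (hB : IsTransition M B) (n : ℕ) : B n n ≠ 0 := fun h => by
  simpa [h] using (hB.2.1 n).1

lemma sqrt_tsum_norm_sq_pos (hB : IsTransition M B) (h0 : Summable fun m => ‖B 0 m‖ ^ 2) :
    0 < √(∑' m, ‖B 0 m‖ ^ 2) :=
  Real.sqrt_pos.mpr <| (pow_pos (norm_pos_iff.mpr (hB.apply_diag_ne_zero 0)) 2).trans_le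
    (h0.le_tsum 0 fun m _ => by positivity)

theorem conj_apply_mul_apply_diag {c : ℤ → ℂ} (hherm : ∀ k : ℤ, c (-k) = starRingEnd ℂ (c k))
    (hB : IsTransition (Toep c) B) {k n : ℕ} (hk : k ≤ n) :
    starRingEnd ℂ (B (n - k) n) * B n n = ∑ m ∈ range (n + 1), B k m * starRingEnd ℂ (B 0 m) := by
  set A := (trunc (Toep c) n)⁻¹
  have hA : ∀ i j : Fin (n + 1), A i j = ∑ m ∈ range (n + 1), starRingEnd ℂ (B i m) * B j m := by
    intro i j
    simp [A, hB.inv_trunc_eq, mul_apply, trunc, Fin.sum_univ_eq_sum_range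
      (fun m => starRingEnd ℂ (B i m) * B j m)]
  let k' : Fin (n + 1) := ⟨k, by omega⟩
  have hpersym : A k'.rev (Fin.last n) = A 0 k' :=
    congrFun (congrFun (inv_submatrix_eq_transpose _ (trunc_toep_submatrix_rev c n)) k') 0
  have hsymm : A 0 k' = starRingEnd ℂ (A k' 0) :=
    ((trunc_toep_isHermitian hherm n).inv.apply 0 k').symm
  have hlast : A k'.rev (Fin.last n) = starRingEnd ℂ (B (n - k) n) * B n n := by
    rw [hA, Finset.sum_eq_single_of_mem n (self_mem_range_succ n)]
    · simp [k']
    · intro m hm hmn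
      rw [Fin.val_last, hB.1 n m (by simp at hm; omega), mul_zero]
  rw [← hlast, hpersym, hsymm, hA, map_sum]
  simp [k']

theorem norm_sq_apply_diag {c : ℤ → ℂ} (hherm : ∀ k : ℤ, c (-k) = starRingEnd ℂ (c k))
    (hB : IsTransition (Toep c) B) (n : ℕ) :
    ‖B n n‖ ^ 2 = ∑ m ∈ range (n + 1), ‖B 0 m‖ ^ 2 := by
  have h := hB.conj_apply_mul_apply_diag hherm (Nat.zero_le n)
  simp only [Nat.sub_zero, Complex.conj_mul', Complex.mul_conj'] at h
  exact_mod_cast h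

theorem tendsto_apply_diag {c : ℤ → ℂ} (hherm : ∀ k : ℤ, c (-k) = starRingEnd ℂ (c k))
    (hB : IsTransition (Toep c) B) (h0 : Summable fun m => ‖B 0 m‖ ^ 2) :
    Tendsto (fun n => B n n) atTop (𝓝 (√(∑' m, ‖B 0 m‖ ^ 2) : ℂ)) := by
  have hpartial : Tendsto (fun n => ∑ m ∈ range (n + 1), ‖B 0 m‖ ^ 2) atTop
      (𝓝 (∑' m, ‖B 0 m‖ ^ 2)) :=
    h0.hasSum.tendsto_sum_nat.comp (tendsto_add_atTop_nat 1)
  have hsqrt := (Complex.continuous_ofReal.tendsto _).comp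
    ((Real.continuous_sqrt.tendsto _).comp hpartial)
  refine hsqrt.congr fun n => ?_
  simp only [Function.comp_apply, ← hB.norm_sq_apply_diag hherm n,
    Real.sqrt_sq (norm_nonneg _), ← hB.apply_diag_eq_norm]

theorem tendsto_apply_sub_self {c : ℤ → ℂ} (hherm : ∀ k : ℤ, c (-k) = starRingEnd ℂ (c k))
    (hB : IsTransition (Toep c) B) (hrows : ∀ i, Summable fun m => ‖B i m‖ ^ 2) (k : ℕ) :
    Tendsto (fun n => B (n - k) n) atTop
      (𝓝 (starRingEnd ℂ (∑' m, B k m * starRingEnd ℂ (B 0 m)) / √(∑' m, ‖B 0 m‖ ^ 2))) := by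
  have hpartial : Tendsto (fun n => ∑ m ∈ range (n + 1), B k m * starRingEnd ℂ (B 0 m)) atTop
      (𝓝 (∑' m, B k m * starRingEnd ℂ (B 0 m))) :=
    (summable_mul_conj_of_summable_sq (hrows k) (hrows 0)).hasSum.tendsto_sum_nat.comp
      (tendsto_add_atTop_nat 1)
  have hquot := ((continuous_star.tendsto _).comp hpartial).div
    (hB.tendsto_apply_diag hherm (hrows 0))
    (Complex.ofReal_ne_zero.mpr (hB.sqrt_tsum_norm_sq_pos (hrows 0)).ne')
  refine hquot.congr' ?_
  filter_upwards [eventually_ge_atTop k] with n hn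
  have hBnn_real : star (B n n) = B n n := by
    rw [hB.apply_diag_eq_norm, Complex.star_def, Complex.conj_ofReal]
  rw [Pi.div_apply, Function.comp_apply, ← hB.conj_apply_mul_apply_diag hherm hn, star_mul',
    hBnn_real, Complex.star_def, Complex.conj_conj,
    mul_div_cancel_right₀ _ (hB.apply_diag_ne_zero n)]

end IsTransition

theorem stmt7_general (c : ℤ → ℂ) (B : ℕ → ℕ → ℂ)
    (hherm : ∀ k : ℤ, c (-k) = (starRingEnd ℂ) (c k))
    (hB : IsTransition (Toep c) B)
    (hrows : ∀ i : ℕ, Summable fun k => ‖B i k‖ ^ 2) :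
    (∀ k : ℕ, ∃ β : ℂ, Tendsto (fun n => B (n - k) n) atTop (𝓝 β)) ∧
    (Tendsto (fun n => B n n) atTop (𝓝 ((Real.sqrt (∑' k, ‖B 0 k‖ ^ 2) : ℝ) : ℂ)) ∧
      0 < Real.sqrt (∑' k, ‖B 0 k‖ ^ 2)) :=
  ⟨fun k => ⟨_, hB.tendsto_apply_sub_self hherm hrows k⟩, hB.tendsto_apply_diag hherm (hrows 0),
    hB.sqrt_tsum_norm_sq_pos (hrows 0)⟩

/-- if `T` is an HPD Toeplitz matrix whose transition matrix `B` has all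
rows in `ℓ²` (so that `A = conj(B) Bᵗ` exists), then `B` is weakly asymptotic
Toeplitz: all limits `β_k = lim_n b_{n-k,n}` exist; moreover
`β_0 = √(a_{0,0}) > 0` with `a_{0,0} = Σ_k |b_{0,k}|²`. -/
theorem stmt7 (c : ℤ → ℂ) (B : ℕ → ℕ → ℂ)
    (hherm : ∀ k : ℤ, c (-k) = (starRingEnd ℂ) (c k))
    (hHPD : IsHPD (Toep c)) (hB : IsTransition (Toep c) B)
    (hrows : ∀ i : ℕ, Summable fun k => ‖B i k‖ ^ 2) :
    (∀ k : ℕ, ∃ β : ℂ, Tendsto (fun n => B (n - k) n) atTop (𝓝 β)) ∧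
    (Tendsto (fun n => B n n) atTop (𝓝 ((Real.sqrt (∑' k, ‖B 0 k‖ ^ 2) : ℝ) : ℂ)) ∧
      0 < Real.sqrt (∑' k, ‖B 0 k‖ ^ 2)) :=
  stmt7_general c B hherm hB hrows
end
end

section
/- Let ν be a positive measure on the unit circle 𝕋 with infinite support, let P_n(z) = Σ_{k=0}^n b_{k,n}(ν) z^k be its orthonormal polynomials (with b_{n,n}(ν) > 0), and let λ_n(ν) be the smallest eigenvalue of the truncated moment matrix T_n(ν). If lim_{n→∞} λ_n(ν) > 0, then for every k ∈ ℕ the limit lim_{n→∞} b_{n-k,n}(ν) exists. -/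
open MeasureTheory Filter Matrix
open scoped ComplexOrder Topology

noncomputable section

/-- The moment matrix of a measure on `ℂ`. -/
def momMat (ν : Measure ℂ) : ℕ → ℕ → ℂ :=
  fun i j => ∫ z, z ^ i * (starRingEnd ℂ) z ^ j ∂ν

/-!
Write `Φ_n^*` for the reversed monic orthogonal polynomial, normalised by `Φ_n^*(0) = 1`, so
that `‖Φ_n^*‖² = b_{n,n}⁻²` in `L²(ν)`. Since the moment matrix is Toeplitz, reflection shows that
`Φ_m^*` is orthogonal to every polynomial of degree `≤ m` vanishing at `0`, in particular to
`Φ_n^* - Φ_m^*` for `n ≤ m`; by Pythagoras `‖Φ_n^* - Φ_m^*‖² = b_{n,n}⁻² - b_{m,m}⁻²`.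
A polynomial of degree `≤ N` also has degree `≤ N'` for every `N' ≥ N`, so letting `N' → ∞` in
the Rayleigh quotient shows that its squared `L²(ν)` norm is at least `λ` times the squared
norm of its coefficient vector. Hence `b_{n,n}⁻²` decreases to a limit `≥ λ > 0`, the
coefficients of `Φ_n^*` form Cauchy sequences, and `b_{n-k,n} = b_{n,n} · conj (coefficient k
of Φ_n^*)` converges.
-/

namespace OPUC

open Finset ComplexConjugate

lemma sum_range_eq_of_vanish {M : Type*} [AddCommMonoid M] {f : ℕ → M} {n N : ℕ}
    (hnN : n ≤ N) (hf : ∀ i, n < i → f i = 0) :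
    ∑ i ∈ range (N + 1), f i = ∑ i ∈ range (n + 1), f i :=
  (sum_subset (range_subset_range.2 (by omega)) fun i _ hi => hf i (by simpa using hi)).symm

lemma normSq_le_sum_range {v : ℕ → ℂ} {N : ℕ} (hv : ∀ i, N < i → v i = 0) (k : ℕ) :
    Complex.normSq (v k) ≤ ∑ j ∈ range (N + 1), Complex.normSq (v j) := by
  by_cases hk : k ≤ N
  · exact single_le_sum (fun j _ => Complex.normSq_nonneg (v j)) (mem_range.2 (by omega))
  · rw [hv k (by omega), map_zero]
    exact sum_nonneg fun j _ => Complex.normSq_nonneg (v j)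

lemma cauchySeq_of_mul_dist_sq_le {α : Type*} [PseudoMetricSpace α] {a : ℕ → α} {t : ℕ → ℝ}
    {c : ℝ} (hc : 0 < c) (ht : CauchySeq t)
    (h : ∀ n m, n ≤ m → c * dist (a n) (a m) ^ 2 ≤ t n - t m) : CauchySeq a := by
  rw [Metric.cauchySeq_iff'] at ht ⊢
  intro ε hε
  obtain ⟨N, hN⟩ := ht (c * ε ^ 2) (by positivity)
  refine ⟨N, fun n hn => ?_⟩
  have hdist : c * dist (a N) (a n) ^ 2 < c * ε ^ 2 :=
    (h N n hn).trans_lt (by linarith [(abs_lt.1 (Real.dist_eq _ _ ▸ hN n hn)).1])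
  rw [dist_comm]
  exact lt_of_pow_lt_pow_left₀ 2 hε.le (lt_of_mul_lt_mul_left hdist hc.le)

variable {ν : Measure ℂ} {B : ℕ → ℕ → ℂ}

lemma integrable_pow_mul_conj_pow [IsFiniteMeasure ν] (hs : ∀ᵐ z ∂ν, ‖z‖ = 1) (i j : ℕ) :
    Integrable (fun z => z ^ i * conj z ^ j) ν := by
  refine (integrable_const (1 : ℝ)).mono' (by fun_prop) ?_
  filter_upwards [hs] with z hz
  simp [hz]

/-- On the unit circle `z ^ a * conj z ^ b = z ^ (a - b)`, so the moment matrix is Toeplitz. -/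
lemma momMat_eq_of_add_eq (hs : ∀ᵐ z ∂ν, ‖z‖ = 1) {a b c d : ℕ} (h : a + d = b + c) :
    momMat ν a b = momMat ν c d := by
  refine integral_congr_ae ?_
  filter_upwards [hs] with z hz
  have hz0 : z ≠ 0 := by rintro rfl; simp at hz
  rw [← Complex.inv_eq_conj hz, inv_pow, inv_pow]
  field_simp
  rw [← pow_add, ← pow_add, h, add_comm]

lemma conj_momMat (i j : ℕ) : conj (momMat ν i j) = momMat ν j i := by
  rw [momMat, momMat, ← integral_conj]
  simp [mul_comm]

def momForm (ν : Measure ℂ) (N : ℕ) (x y : ℕ → ℂ) : ℂ :=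
  ∑ i ∈ range (N + 1), ∑ j ∈ range (N + 1), x i * momMat ν i j * conj (y j)

section momForm

variable {N : ℕ} {x x' y y' : ℕ → ℂ}

lemma momForm_add_left : momForm ν N (x + x') y = momForm ν N x y + momForm ν N x' y := by
  simp only [momForm, ← sum_add_distrib, Pi.add_apply, add_mul]

lemma momForm_sub_left : momForm ν N (x - x') y = momForm ν N x y - momForm ν N x' y := by
  simp only [momForm, ← sum_sub_distrib, Pi.sub_apply, sub_mul]

lemma momForm_sub_right : momForm ν N x (y - y') = momForm ν N x y - momForm ν N x y' := by
  simp only [momForm, ← sum_sub_distrib, Pi.sub_apply, map_sub, mul_sub]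

lemma momForm_smul_left (s : ℂ) : momForm ν N (s • x) y = s * momForm ν N x y := by
  simp only [momForm, mul_sum, Pi.smul_apply, smul_eq_mul, mul_assoc]

lemma momForm_smul_right (s : ℂ) : momForm ν N x (s • y) = conj s * momForm ν N x y := by
  simp only [momForm, mul_sum, Pi.smul_apply, smul_eq_mul, map_mul]
  exact sum_congr rfl fun i _ => sum_congr rfl fun j _ => by ring

lemma conj_momForm : conj (momForm ν N x y) = momForm ν N y x := by
  rw [momForm, momForm, map_sum, sum_comm]
  simp only [map_sum, map_mul, Complex.conj_conj, conj_momMat]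
  exact sum_congr rfl fun i _ => sum_congr rfl fun j _ => by ring

lemma momForm_sub_self_of_orthogonal (h : momForm ν N y (x - y) = 0) :
    momForm ν N (x - y) (x - y) = momForm ν N x x - momForm ν N y y := by
  have h' : momForm ν N (x - y) y = 0 := by rw [← conj_momForm, h, map_zero]
  rw [momForm_sub_right] at h
  rw [momForm_sub_left] at h'
  rw [momForm_sub_left, momForm_sub_right, momForm_sub_right]
  linear_combination -h - h'

lemma momForm_of_le {n : ℕ} (hnN : n ≤ N) (hx : ∀ i, n < i → x i = 0)
    (hy : ∀ j, n < j → y j = 0) : momForm ν N x y = momForm ν n x y := by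
  rw [momForm, sum_range_eq_of_vanish hnN fun i hi => by simp [hx i hi]]
  refine sum_congr rfl fun i _ => sum_range_eq_of_vanish hnN fun j hj => by simp [hy j hj]

end momForm

lemma momForm_eq_integral [IsFiniteMeasure ν] (hs : ∀ᵐ z ∂ν, ‖z‖ = 1) (N : ℕ) (x y : ℕ → ℂ) :
    momForm ν N x y = ∫ z, (∑ i ∈ range (N + 1), x i * z ^ i) *
      conj (∑ j ∈ range (N + 1), y j * z ^ j) ∂ν := by
  simp only [map_sum, map_mul, map_pow, sum_mul_sum]
  rw [integral_finsetSum _ fun i _ => integrable_finsetSum _ fun j _ =>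
    (integrable_pow_mul_conj_pow hs i j).const_mul (x i * conj (y j)) |>.congr
      (Eventually.of_forall fun z => by ring)]
  refine sum_congr rfl fun i _ => ?_
  rw [integral_finsetSum _ fun j _ =>
    (integrable_pow_mul_conj_pow hs i j).const_mul (x i * conj (y j)) |>.congr
      (Eventually.of_forall fun z => by ring)]
  refine sum_congr rfl fun j _ => ?_
  rw [momMat, ← integral_const_mul, ← integral_mul_const]
  exact integral_congr_ae (Eventually.of_forall fun z => by ring)

lemma momForm_self_re_nonneg [IsFiniteMeasure ν] (hs : ∀ᵐ z ∂ν, ‖z‖ = 1) (N : ℕ)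
    (x : ℕ → ℂ) : 0 ≤ (momForm ν N x x).re := by
  rw [momForm_eq_integral hs]
  simp only [Complex.mul_conj]
  rw [integral_complex_ofReal, Complex.ofReal_re]
  exact integral_nonneg fun z => Complex.normSq_nonneg _

lemma momForm_self_eq_sum_fin (N : ℕ) (x : ℕ → ℂ) :
    momForm ν N x x =
      ∑ i : Fin (N + 1), ∑ j : Fin (N + 1), x i * momMat ν i j * conj (x j) := by
  simp only [momForm, sum_range]

lemma smallestEig_mul_le [IsFiniteMeasure ν] (hs : ∀ᵐ z ∂ν, ‖z‖ = 1) (N : ℕ) (x : ℕ → ℂ) :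
    smallestEig (momMat ν) N * ∑ i ∈ range (N + 1), Complex.normSq (x i) ≤
      (momForm ν N x x).re := by
  have hbdd : BddBelow (Set.range fun v : {v : Fin (N + 1) → ℂ // v ≠ 0} =>
      (∑ i : Fin (N + 1), ∑ j : Fin (N + 1), v.1 i * momMat ν i j * conj (v.1 j)).re /
        ∑ i, Complex.normSq (v.1 i)) := by
    refine ⟨0, ?_⟩
    rintro _ ⟨v, rfl⟩
    have hv := momForm_self_re_nonneg hs N fun i => if h : i < N + 1 then v.1 ⟨i, h⟩ else 0
    simp only [momForm_self_eq_sum_fin, Fin.is_lt, dite_true] at hv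
    exact div_nonneg hv (sum_nonneg fun i _ => Complex.normSq_nonneg _)
  rcases (sum_nonneg fun i _ => Complex.normSq_nonneg (x i) :
    0 ≤ ∑ i ∈ range (N + 1), Complex.normSq (x i)).eq_or_lt with h0 | hpos
  · rw [← h0, mul_zero]
    exact momForm_self_re_nonneg hs N x
  rw [sum_range] at hpos ⊢
  have hx : (fun i : Fin (N + 1) => x i) ≠ 0 := by
    intro h
    simp [fun i => congrFun h i] at hpos
  rw [← le_div_iff₀ hpos, momForm_self_eq_sum_fin]
  exact ciInf_le hbdd ⟨_, hx⟩

lemma mul_sum_normSq_le_momForm [IsFiniteMeasure ν] (hs : ∀ᵐ z ∂ν, ‖z‖ = 1) {lam : ℝ}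
    (hlam : Tendsto (smallestEig (momMat ν)) atTop (𝓝 lam)) {N : ℕ} {x : ℕ → ℂ}
    (hx : ∀ i, N < i → x i = 0) :
    lam * ∑ i ∈ range (N + 1), Complex.normSq (x i) ≤ (momForm ν N x x).re := by
  refine le_of_tendsto (hlam.mul_const _) (eventually_atTop.2 ⟨N, fun N' hN' => ?_⟩)
  have h := smallestEig_mul_le hs N' x
  rwa [sum_range_eq_of_vanish hN' fun i hi => by simp [hx i hi], momForm_of_le hN' hx hx] at h

def orthoCoeff (B : ℕ → ℕ → ℂ) (n : ℕ) : ℕ → ℂ := fun k => if k ≤ n then B k n else 0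

lemma orthoCoeff_of_lt {n k : ℕ} (h : n < k) : orthoCoeff B n k = 0 := if_neg (by omega)

def IsOrthonormal (ν : Measure ℂ) (B : ℕ → ℕ → ℂ) : Prop :=
  ∀ N n m, n ≤ N → m ≤ N →
    momForm ν N (orthoCoeff B n) (orthoCoeff B m) = if n = m then 1 else 0

lemma isOrthonormal_of_integral [IsFiniteMeasure ν] (hs : ∀ᵐ z ∂ν, ‖z‖ = 1)
    (hortho : ∀ n m : ℕ, ∫ z, (∑ k ∈ range (n + 1), B k n * z ^ k) *
      conj (∑ k ∈ range (m + 1), B k m * z ^ k) ∂ν = if n = m then 1 else 0) :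
    IsOrthonormal ν B := by
  have hpoly : ∀ {N p : ℕ}, p ≤ N → ∀ z : ℂ,
      ∑ i ∈ range (N + 1), orthoCoeff B p i * z ^ i = ∑ k ∈ range (p + 1), B k p * z ^ k := by
    intro N p hp z
    rw [sum_range_eq_of_vanish hp fun i hi => by simp [orthoCoeff_of_lt hi]]
    exact sum_congr rfl fun k hk => by rw [orthoCoeff, if_pos (Nat.lt_succ_iff.1 (mem_range.1 hk))]
  intro N n m hn hm
  simp only [momForm_eq_integral hs, hpoly hn, hpoly hm, hortho]

/-- The `P_n` with `n < m` span the polynomials of degree `< m`, because `B` is triangular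
with nonzero diagonal. -/
lemma momForm_orthoCoeff_eq_zero {N m : ℕ} (hB : ∀ n, B n n ≠ 0)
    (hON : ∀ n < m, momForm ν N (orthoCoeff B n) (orthoCoeff B m) = 0)
    {x : ℕ → ℂ} (hx : ∀ i, m ≤ i → x i = 0) : momForm ν N x (orthoCoeff B m) = 0 := by
  suffices h : ∀ d ≤ m, ∀ x : ℕ → ℂ, (∀ i, d ≤ i → x i = 0) →
      momForm ν N x (orthoCoeff B m) = 0 from h m le_rfl x hx
  intro d
  induction d with
  | zero =>
    intro _ x hx
    simp [momForm, hx]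
  | succ d ih =>
    intro hd x hx
    set s := x d / B d d
    rw [← add_sub_cancel (s • orthoCoeff B d) x, momForm_add_left, momForm_smul_left,
      hON d (by omega), mul_zero, zero_add]
    refine ih (by omega) _ fun i hi => ?_
    rcases hi.eq_or_lt with rfl | hlt
    · simp [s, orthoCoeff, hB d]
    · simp [hx i hlt, orthoCoeff_of_lt hlt]

/-- Coefficients of the reversed polynomial `z ^ n * conj (p (1 / conj z))`. -/
def conjReflect (n : ℕ) (x : ℕ → ℂ) : ℕ → ℂ := fun j => if j ≤ n then conj (x (n - j)) else 0

lemma conjReflect_of_lt {n j : ℕ} {x : ℕ → ℂ} (h : n < j) : conjReflect n x j = 0 :=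
  if_neg (by omega)

lemma conjReflect_conjReflect {n : ℕ} {x : ℕ → ℂ} (hx : ∀ i, n < i → x i = 0) :
    conjReflect n (conjReflect n x) = x := by
  funext j
  by_cases hj : j ≤ n
  · simp [conjReflect, hj, Nat.sub_sub_self hj]
  · simp [conjReflect, hj, hx j (by omega)]

lemma momForm_conjReflect_left (hs : ∀ᵐ z ∂ν, ‖z‖ = 1) (n : ℕ) (x y : ℕ → ℂ) :
    momForm ν n (conjReflect n x) y = momForm ν n (conjReflect n y) x := by
  have key : ∀ x y : ℕ → ℂ, momForm ν n (conjReflect n x) y =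
      ∑ a ∈ range (n + 1), ∑ j ∈ range (n + 1), conj (x a) * conj (y j) * momMat ν (n - a) j := by
    intro x y
    rw [momForm, ← sum_range_reflect]
    refine sum_congr rfl fun a ha => sum_congr rfl fun j _ => ?_
    have ha : a ≤ n := Nat.lt_succ_iff.1 (mem_range.1 ha)
    simp only [conjReflect, Nat.add_sub_cancel, if_pos (Nat.sub_le n a), Nat.sub_sub_self ha]
    ring
  rw [key, key, sum_comm]
  refine sum_congr rfl fun j hj => sum_congr rfl fun a ha => ?_
  have ha : a ≤ n := Nat.lt_succ_iff.1 (mem_range.1 ha)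
  have hj : j ≤ n := Nat.lt_succ_iff.1 (mem_range.1 hj)
  rw [momMat_eq_of_add_eq hs (show n - a + a = j + (n - j) by omega)]
  ring

/-- Coefficients of the reversed monic orthogonal polynomial `Φ_n^* = P_n^* / b_{n,n}`. -/
def monicReverse (B : ℕ → ℕ → ℂ) (n : ℕ) : ℕ → ℂ :=
  ((B n n).re : ℂ)⁻¹ • conjReflect n (orthoCoeff B n)

lemma monicReverse_of_lt {n j : ℕ} (h : n < j) : monicReverse B n j = 0 := by
  simp [monicReverse, conjReflect_of_lt h]

lemma monicReverse_zero (hdiag : ∀ n, 0 < (B n n).re ∧ (B n n).im = 0) (n : ℕ) :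
    monicReverse B n 0 = 1 := by
  have hconj : conj (B n n) = (B n n).re := by apply Complex.ext <;> simp [(hdiag n).2]
  simp [monicReverse, conjReflect, orthoCoeff, hconj, (hdiag n).1.ne']

lemma re_mul_conj_monicReverse {n k : ℕ} (hB : (B n n).re ≠ 0) (hk : k ≤ n) :
    ((B n n).re : ℂ) * conj (monicReverse B n k) = B (n - k) n := by
  have hB' : ((B n n).re : ℂ) ≠ 0 := by exact_mod_cast hB
  simp [monicReverse, conjReflect, orthoCoeff, hk, hB']

lemma momForm_monicReverse_self (hs : ∀ᵐ z ∂ν, ‖z‖ = 1) (hON : IsOrthonormal ν B) {n N : ℕ}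
    (hnN : n ≤ N) :
    momForm ν N (monicReverse B n) (monicReverse B n) = (((B n n).re ^ 2)⁻¹ : ℝ) := by
  rw [momForm_of_le hnN (fun _ => monicReverse_of_lt) (fun _ => monicReverse_of_lt), monicReverse,
    momForm_smul_left, momForm_smul_right, momForm_conjReflect_left hs,
    conjReflect_conjReflect fun _ => orthoCoeff_of_lt, hON n n n le_rfl le_rfl, if_pos rfl]
  simp only [map_inv₀, Complex.conj_ofReal]
  push_cast
  ring

/-- `Φ_m^*` is orthogonal to every polynomial of degree `≤ m` vanishing at `0`: reflection
turns this into the orthogonality of `P_m` to the polynomials of degree `< m`. -/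
lemma momForm_monicReverse_eq_zero (hs : ∀ᵐ z ∂ν, ‖z‖ = 1)
    (hdiag : ∀ n, 0 < (B n n).re ∧ (B n n).im = 0) (hON : IsOrthonormal ν B) (m : ℕ)
    {y : ℕ → ℂ} (hy : y 0 = 0) : momForm ν m (monicReverse B m) y = 0 := by
  have hB : ∀ n, B n n ≠ 0 := fun n h => (hdiag n).1.ne' (by simp [h])
  have hlow : ∀ n < m, momForm ν m (orthoCoeff B n) (orthoCoeff B m) = 0 := fun n h => by
    rw [hON m n m h.le le_rfl, if_neg h.ne]
  have hy' : ∀ i, m ≤ i → conjReflect m y i = 0 := fun i hi => by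
    rcases hi.eq_or_lt with rfl | hlt
    · simp [conjReflect, hy]
    · exact conjReflect_of_lt hlt
  rw [monicReverse, momForm_smul_left, momForm_conjReflect_left hs,
    momForm_orthoCoeff_eq_zero hB hlow hy', mul_zero]

lemma momForm_sub_monicReverse (hs : ∀ᵐ z ∂ν, ‖z‖ = 1)
    (hdiag : ∀ n, 0 < (B n n).re ∧ (B n n).im = 0) (hON : IsOrthonormal ν B) {n m : ℕ}
    (hnm : n ≤ m) :
    momForm ν m (monicReverse B n - monicReverse B m) (monicReverse B n - monicReverse B m) =
      (((B n n).re ^ 2)⁻¹ - ((B m m).re ^ 2)⁻¹ : ℝ) := by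
  rw [momForm_sub_self_of_orthogonal (momForm_monicReverse_eq_zero hs hdiag hON m
      (by simp [monicReverse_zero hdiag])),
    momForm_monicReverse_self hs hON hnm, momForm_monicReverse_self hs hON le_rfl]
  push_cast
  ring

section Estimates

variable [IsFiniteMeasure ν] (hs : ∀ᵐ z ∂ν, ‖z‖ = 1) {lam : ℝ} (hlam0 : 0 ≤ lam)
  (hlam : Tendsto (smallestEig (momMat ν)) atTop (𝓝 lam))
  (hdiag : ∀ n, 0 < (B n n).re ∧ (B n n).im = 0) (hON : IsOrthonormal ν B)
include hs hlam0 hlam hdiag hON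

lemma le_inv_sq_re (n : ℕ) : lam ≤ ((B n n).re ^ 2)⁻¹ := by
  have h := mul_sum_normSq_le_momForm hs hlam (x := monicReverse B n) fun _ => monicReverse_of_lt
  rw [momForm_monicReverse_self hs hON le_rfl, Complex.ofReal_re] at h
  have h1 := normSq_le_sum_range (v := monicReverse B n) (fun _ => monicReverse_of_lt) 0
  rw [monicReverse_zero hdiag, map_one] at h1
  nlinarith

lemma mul_dist_monicReverse_sq_le (k : ℕ) {n m : ℕ} (hnm : n ≤ m) :
    lam * dist (monicReverse B n k) (monicReverse B m k) ^ 2 ≤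
      ((B n n).re ^ 2)⁻¹ - ((B m m).re ^ 2)⁻¹ := by
  have hv : ∀ i, m < i → (monicReverse B n - monicReverse B m) i = 0 := fun i hi => by
    simp [monicReverse_of_lt hi, monicReverse_of_lt (hnm.trans_lt hi)]
  calc lam * dist (monicReverse B n k) (monicReverse B m k) ^ 2
      = lam * Complex.normSq ((monicReverse B n - monicReverse B m) k) := by
        rw [Complex.dist_eq, Complex.sq_norm, Pi.sub_apply]
    _ ≤ lam * ∑ j ∈ range (m + 1),
          Complex.normSq ((monicReverse B n - monicReverse B m) j) :=
        mul_le_mul_of_nonneg_left (normSq_le_sum_range hv k) hlam0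
    _ ≤ (momForm ν m (monicReverse B n - monicReverse B m)
          (monicReverse B n - monicReverse B m)).re := mul_sum_normSq_le_momForm hs hlam hv
    _ = ((B n n).re ^ 2)⁻¹ - ((B m m).re ^ 2)⁻¹ := by
        rw [momForm_sub_monicReverse hs hdiag hON hnm, Complex.ofReal_re]

end Estimates

end OPUC

theorem stmt10_general (ν : Measure ℂ) [IsFiniteMeasure ν]
    (hsupp : ν {z : ℂ | ‖z‖ ≠ 1} = 0)
    (B : ℕ → ℕ → ℂ)
    (hdiag : ∀ n : ℕ, 0 < (B n n).re ∧ (B n n).im = 0)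
    (hortho : ∀ n m : ℕ,
      ∫ z, (∑ k ∈ Finset.range (n + 1), B k n * z ^ k) *
        (starRingEnd ℂ) (∑ k ∈ Finset.range (m + 1), B k m * z ^ k) ∂ν
          = if n = m then 1 else 0)
    (lam : ℝ) (hlam : Tendsto (smallestEig (momMat ν)) atTop (𝓝 lam)) (hpos : 0 < lam) :
    ∀ k : ℕ, ∃ β : ℂ, Tendsto (fun n => B (n - k) n) atTop (𝓝 β) := by
  intro k
  have hs : ∀ᵐ z ∂ν, ‖z‖ = 1 := ae_iff.2 hsupp
  have hON := OPUC.isOrthonormal_of_integral hs hortho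
  set t : ℕ → ℝ := fun n => ((B n n).re ^ 2)⁻¹
  have hest : ∀ n m, n ≤ m →
      lam * dist (OPUC.monicReverse B n k) (OPUC.monicReverse B m k) ^ 2 ≤ t n - t m :=
    fun _ _ => OPUC.mul_dist_monicReverse_sq_le hs hpos.le hlam hdiag hON k
  have hlow := OPUC.le_inv_sq_re hs hpos.le hlam hdiag hON
  have hanti : Antitone t := fun n m hnm =>
    sub_nonneg.1 ((by positivity : 0 ≤ lam * _).trans (hest n m hnm))
  have ht : Tendsto t atTop (𝓝 (⨅ n, t n)) :=
    tendsto_atTop_ciInf hanti ⟨lam, Set.forall_mem_range.2 hlow⟩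
  have hTpos : 0 < ⨅ n, t n := hpos.trans_le (le_ciInf hlow)
  obtain ⟨γ, hγ⟩ := cauchySeq_tendsto_of_complete
    (OPUC.cauchySeq_of_mul_dist_sq_le hpos ht.cauchySeq hest)
  have hre : Tendsto (fun n => (B n n).re) atTop (𝓝 (√(⨅ n, t n))⁻¹) := by
    refine (((Real.continuous_sqrt.tendsto _).comp ht).inv₀ (Real.sqrt_pos.2 hTpos).ne').congr
      fun n => ?_
    simp [t, Real.sqrt_inv, Real.sqrt_sq (hdiag n).1.le]
  refine ⟨((√(⨅ n, t n))⁻¹ : ℝ) * starRingEnd ℂ γ,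
    (((Complex.continuous_ofReal.tendsto _).comp hre).mul
      ((Complex.continuous_conj.tendsto _).comp hγ)).congr' ?_⟩
  filter_upwards [eventually_ge_atTop k] with n hkn
  exact OPUC.re_mul_conj_monicReverse (hdiag n).1.ne' hkn

/-- for a measure `ν` on the unit circle with infinite support and
`lim λ_n(ν) > 0`, all the limits `lim_n b_{n-k,n}(ν)` of the coefficients of the
orthonormal polynomials of `ν` exist. -/
theorem stmt10 (ν : Measure ℂ) [IsFiniteMeasure ν]
    (hsupp : ν {z : ℂ | ‖z‖ ≠ 1} = 0)
    (hinf : ∀ s : Finset ℂ, ν ((s : Set ℂ))ᶜ ≠ 0)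
    (B : ℕ → ℕ → ℂ)
    (htri : ∀ k n : ℕ, n < k → B k n = 0)
    (hdiag : ∀ n : ℕ, 0 < (B n n).re ∧ (B n n).im = 0)
    (hortho : ∀ n m : ℕ,
      ∫ z, (∑ k ∈ Finset.range (n + 1), B k n * z ^ k) *
        (starRingEnd ℂ) (∑ k ∈ Finset.range (m + 1), B k m * z ^ k) ∂ν
          = if n = m then 1 else 0)
    (lam : ℝ) (hlam : Tendsto (smallestEig (momMat ν)) atTop (𝓝 lam)) (hpos : 0 < lam) :
    ∀ k : ℕ, ∃ β : ℂ, Tendsto (fun n => B (n - k) n) atTop (𝓝 β) :=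
  stmt10_general ν hsupp B hdiag hortho lam hlam hpos
end
end

section
/- Let ν be a positive measure on the unit circle 𝕋 with infinite support, let m be the normalized Lebesgue measure on 𝕋, and assume m is absolutely continuous with respect to ν. Then the following are equivalent: (1) lim_{n→∞} λ_n(ν) = λ > 0; (2) every f in P²(ν) (the closure of the polynomials in L²(ν)) belongs, via its ν-a.e. class (which determines an m-a.e. class since m ≪ ν), to L²(m), and the identity map I_ν : P²(ν) → L²(m) is bounded; in that case ∫ |f|² dm ≤ λ^{-1} ∫ |f|² dν for every f ∈ P²(ν), with ‖I_ν‖ = λ^{-1/2}. -/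
open MeasureTheory Filter Matrix
open scoped ComplexOrder Topology

noncomputable section

/-- The normalized Lebesgue (arc-length) measure `dθ/(2π)` on the unit circle,
as a measure on `ℂ`. -/
def mCirc : Measure ℂ :=
  (ENNReal.ofReal (2 * Real.pi))⁻¹ •
    Measure.map (fun θ : ℝ => Complex.exp (θ * Complex.I))
      (volume.restrict (Set.Ioc 0 (2 * Real.pi)))

/-- `P²(ν)`: the closure in `L²(ν)` of the set of (classes of) polynomial functions. -/
def polyClosure (ν : Measure ℂ) : Set (Lp ℂ 2 ν) :=
  closure {f : Lp ℂ 2 ν | ∃ p : Polynomial ℂ, (f : ℂ → ℂ) =ᵐ[ν] fun z => p.eval z}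

/-!
On the unit circle the monomials are orthonormal for `m`, so for `p_v = ∑ vᵢ zⁱ` the quadratic
form of `T_n(ν)` at `v` is `∫ |p_v|² dν` while `‖v‖² = ∫ |p_v|² dm`. Hence `λ_n(ν)` is the infimum
of `∫ |p|² dν / ∫ |p|² dm` over nonzero polynomials of degree at most `n`, and `λ > 0` exactly when
`∫ |p|² dm ≤ C ∫ |p|² dν` for all polynomials, the optimal `C` being `λ⁻¹`. Such a bound passes
from polynomials to their `L²(ν)`-closure: a subsequence converges `ν`-a.e., hence `m`-a.e. as
`m ≪ ν`, and Fatou's lemma bounds the `L²(m)` norm of the limit.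
-/

namespace MeasureTheory

variable {α E F : Type*} [MeasurableSpace α] [NormedAddCommGroup E] [NormedAddCommGroup F]
  {μ ν : Measure α}

theorem isClosed_setOf_eLpNorm_le_mul_eLpNorm {p : ENNReal} [Fact (1 ≤ p)] (hμν : μ ≪ ν)
    {C : ENNReal} (hC : C ≠ ⊤) :
    IsClosed {f : Lp E p ν | eLpNorm f p μ ≤ C * eLpNorm f p ν} := by
  refine IsSeqClosed.isClosed fun u f hu hlim => ?_
  obtain ⟨ns, hns, hae⟩ := (tendstoInMeasure_of_tendsto_Lp hlim).exists_seq_tendsto_ae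
  have hnorm : Tendsto (fun k => C * eLpNorm (u (ns k)) p ν) atTop (𝓝 (C * eLpNorm f p ν)) := by
    simp only [← Lp.enorm_def]
    exact ENNReal.Tendsto.const_mul ((hlim.comp hns.tendsto_atTop).enorm) (Or.inr hC)
  calc eLpNorm f p μ ≤ liminf (fun k => eLpNorm (u (ns k)) p μ) atTop :=
        Lp.eLpNorm_lim_le_liminf_eLpNorm (fun _ => (Lp.aestronglyMeasurable _).mono_ac hμν) _
          (hμν.ae_le hae)
    _ ≤ liminf (fun k => C * eLpNorm (u (ns k)) p ν) atTop :=
        liminf_le_liminf (Eventually.of_forall fun k => hu (ns k))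
    _ = C * eLpNorm f p ν := hnorm.liminf_eq

theorem lpNorm_two_eq_sqrt_integral {f : α → E} (hf : AEStronglyMeasurable f μ) :
    lpNorm f 2 μ = √(∫ x, ‖f x‖ ^ 2 ∂μ) := by
  rw [lpNorm_eq_integral_norm_rpow_toReal two_ne_zero ENNReal.ofNat_ne_top hf, Real.sqrt_eq_rpow]
  norm_num

theorem eLpNorm_two_le_ofReal_sqrt_mul_iff {f : α → E} {g : α → F} (hf : MemLp f 2 μ)
    (hg : MemLp g 2 ν) {c : ℝ} (hc : 0 ≤ c) :
    eLpNorm f 2 μ ≤ ENNReal.ofReal √c * eLpNorm g 2 ν ↔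
      ∫ x, ‖f x‖ ^ 2 ∂μ ≤ c * ∫ x, ‖g x‖ ^ 2 ∂ν := by
  rw [← ofReal_lpNorm hf, ← ofReal_lpNorm hg, ← ENNReal.ofReal_mul (Real.sqrt_nonneg c),
    ENNReal.ofReal_le_ofReal_iff (mul_nonneg (Real.sqrt_nonneg c) lpNorm_nonneg),
    lpNorm_two_eq_sqrt_integral hf.1, lpNorm_two_eq_sqrt_integral hg.1, ← Real.sqrt_mul hc,
    Real.sqrt_le_sqrt_iff (mul_nonneg hc (integral_nonneg fun _ => by positivity))]

theorem memLp_of_continuous_of_ae_mem_isCompact [TopologicalSpace α] [OpensMeasurableSpace α]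
    [SecondCountableTopology α] [IsFiniteMeasure μ] {K : Set α} (hK : IsCompact K)
    (hμK : ∀ᵐ x ∂μ, x ∈ K) {f : α → E} (hf : Continuous f) (p : ENNReal) : MemLp f p μ := by
  obtain ⟨C, hC⟩ := hK.exists_bound_of_continuousOn hf.continuousOn
  exact .of_bound hf.aestronglyMeasurable C (hμK.mono hC)

end MeasureTheory

open Polynomial
open scoped ComplexConjugate

theorem measurable_exp_ofReal_mul_I : Measurable fun θ : ℝ => Complex.exp (θ * Complex.I) := by
  fun_prop

theorem ae_norm_eq_one_mCirc : ∀ᵐ z ∂mCirc, ‖z‖ = 1 := by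
  refine Measure.ae_smul_measure ((ae_map_iff measurable_exp_ofReal_mul_I.aemeasurable
    (measurableSet_eq_fun measurable_norm measurable_const)).2 (.of_forall fun θ => ?_)) _
  simp

instance : IsProbabilityMeasure mCirc := by
  constructor
  rw [mCirc, Measure.smul_apply, Measure.map_apply measurable_exp_ofReal_mul_I .univ]
  simp only [Set.preimage_univ, Measure.restrict_apply_univ, Real.volume_Ioc, sub_zero,
    smul_eq_mul]
  exact ENNReal.inv_mul_cancel (by simp [Real.pi_pos]) ENNReal.ofReal_ne_top

theorem integral_mCirc {f : ℂ → ℂ} (hf : Measurable f) :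
    ∫ z, f z ∂mCirc =
      (2 * Real.pi)⁻¹ • ∫ θ in Set.Ioc 0 (2 * Real.pi), f (Complex.exp (θ * Complex.I)) := by
  rw [mCirc, integral_smul_measure,
    integral_map measurable_exp_ofReal_mul_I.aemeasurable hf.aestronglyMeasurable,
    ENNReal.toReal_inv, ENNReal.toReal_ofReal Real.two_pi_pos.le]

theorem setIntegral_exp_int_mul_mul_I (k : ℤ) :
    ∫ θ in Set.Ioc 0 (2 * Real.pi), Complex.exp (k * θ * Complex.I) =
      if k = 0 then ((2 * Real.pi : ℝ) : ℂ) else 0 := by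
  split_ifs with hk
  · simp [hk, Real.two_pi_pos.le]
  have hc : (k * Complex.I : ℂ) ≠ 0 := mul_ne_zero (by exact_mod_cast hk) Complex.I_ne_zero
  have hperiod : Complex.exp (k * Complex.I * (2 * Real.pi : ℝ)) = 1 := by
    rw [← Complex.exp_int_mul_two_pi_mul_I k]
    push_cast
    ring_nf
  simp_rw [mul_right_comm _ _ Complex.I]
  rw [← intervalIntegral.integral_of_le Real.two_pi_pos.le, integral_exp_mul_complex hc, hperiod]
  simp

theorem momMat_mCirc (i j : ℕ) : momMat mCirc i j = if i = j then 1 else 0 := by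
  have hexp (θ : ℝ) :
      Complex.exp (θ * Complex.I) ^ i * conj (Complex.exp (θ * Complex.I)) ^ j =
        Complex.exp (((i - j : ℤ) : ℂ) * θ * Complex.I) := by
    rw [← Complex.exp_conj, ← Complex.exp_nat_mul, ← Complex.exp_nat_mul, ← Complex.exp_add]
    simp only [map_mul, Complex.conj_ofReal, Complex.conj_I]
    push_cast
    ring_nf
  rw [momMat, integral_mCirc (by fun_prop), funext hexp, setIntegral_exp_int_mul_mul_I]
  simp only [sub_eq_zero, Nat.cast_inj]
  split_ifs <;> simp [field]

section Circle

variable {μ : Measure ℂ} [IsFiniteMeasure μ]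

theorem memLp_of_continuous_of_ae_norm_eq_one (h1 : ∀ᵐ z ∂μ, ‖z‖ = 1) {f : ℂ → ℂ}
    (hf : Continuous f) (p : ENNReal) : MemLp f p μ :=
  memLp_of_continuous_of_ae_mem_isCompact (isCompact_sphere 0 1) (by simpa using h1) hf p

theorem sum_mul_momMat_mul_conj (h1 : ∀ᵐ z ∂μ, ‖z‖ = 1) {k : ℕ} (v : Fin k → ℂ) :
    ∑ i : Fin k, ∑ j : Fin k, v i * momMat μ i j * conj (v j) =
      ∫ z, (∑ i, v i * z ^ (i : ℕ)) * conj (∑ j, v j * z ^ (j : ℕ)) ∂μ := by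
  have hint (i j : Fin k) :
      Integrable (fun z => v i * (z ^ (i : ℕ) * conj z ^ (j : ℕ)) * conj (v j)) μ :=
    memLp_one_iff_integrable.1 (memLp_of_continuous_of_ae_norm_eq_one h1 (by fun_prop) 1)
  simp_rw [momMat, ← integral_const_mul, ← integral_mul_const]
  simp_rw [← integral_finsetSum _ fun j _ => hint _ j]
  rw [← integral_finsetSum _ fun i _ => integrable_finsetSum _ fun j _ => hint i j]
  congr 1 with z
  simp only [map_sum, map_mul, map_pow, Finset.sum_mul_sum]
  refine Finset.sum_congr rfl fun i _ => Finset.sum_congr rfl fun j _ => by ring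

theorem re_sum_mul_momMat_mul_conj (h1 : ∀ᵐ z ∂μ, ‖z‖ = 1) {k : ℕ} (v : Fin k → ℂ) :
    (∑ i : Fin k, ∑ j : Fin k, v i * momMat μ i j * conj (v j)).re =
      ∫ z, ‖∑ i, v i * z ^ (i : ℕ)‖ ^ 2 ∂μ := by
  rw [sum_mul_momMat_mul_conj h1]
  simp_rw [Complex.mul_conj', ← Complex.ofReal_pow]
  rw [integral_complex_ofReal, Complex.ofReal_re]

end Circle

theorem integral_norm_sum_mul_pow_sq_mCirc {k : ℕ} (v : Fin k → ℂ) :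
    ∫ z, ‖∑ i, v i * z ^ (i : ℕ)‖ ^ 2 ∂mCirc = ∑ i, Complex.normSq (v i) := by
  rw [← re_sum_mul_momMat_mul_conj ae_norm_eq_one_mCirc]
  simp [momMat_mCirc, Fin.val_inj, Complex.mul_conj]

theorem integral_norm_sum_mul_pow_sq_mCirc_pos {k : ℕ} {v : Fin k → ℂ} (hv : v ≠ 0) :
    0 < ∫ z, ‖∑ i, v i * z ^ (i : ℕ)‖ ^ 2 ∂mCirc := by
  obtain ⟨i, hi⟩ := Function.ne_iff.1 hv
  rw [integral_norm_sum_mul_pow_sq_mCirc]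
  exact Finset.sum_pos' (fun j _ => Complex.normSq_nonneg _)
    ⟨i, Finset.mem_univ i, Complex.normSq_pos.2 hi⟩

theorem sum_coeff_mul_pow {q : ℂ[X]} {n : ℕ} (hq : q.natDegree ≤ n) (z : ℂ) :
    ∑ i : Fin (n + 1), q.coeff i * z ^ (i : ℕ) = q.eval z := by
  rw [eval_eq_sum_range' (Nat.lt_succ_of_le hq),
    Fin.sum_univ_eq_sum_range (fun i => q.coeff i * z ^ i)]

section SmallestEig

variable {ν : Measure ℂ} [IsFiniteMeasure ν]

theorem smallestEig_momMat_eq (h1 : ∀ᵐ z ∂ν, ‖z‖ = 1) (n : ℕ) :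
    smallestEig (momMat ν) n = ⨅ v : {v : Fin (n + 1) → ℂ // v ≠ 0},
      (∫ z, ‖∑ i, v.1 i * z ^ (i : ℕ)‖ ^ 2 ∂ν) /
        ∫ z, ‖∑ i, v.1 i * z ^ (i : ℕ)‖ ^ 2 ∂mCirc := by
  simp only [smallestEig, re_sum_mul_momMat_mul_conj h1, integral_norm_sum_mul_pow_sq_mCirc]

theorem smallestEig_momMat_mul_le (h1 : ∀ᵐ z ∂ν, ‖z‖ = 1) {q : ℂ[X]} {n : ℕ}
    (hq : q.natDegree ≤ n) :
    smallestEig (momMat ν) n * ∫ z, ‖q.eval z‖ ^ 2 ∂mCirc ≤ ∫ z, ‖q.eval z‖ ^ 2 ∂ν := by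
  rcases eq_or_ne q 0 with rfl | hq0
  · simp
  set v : Fin (n + 1) → ℂ := fun i => q.coeff i
  have hv : v ≠ 0 := fun h => hq0 (leadingCoeff_eq_zero.1 (congrFun h ⟨q.natDegree, by omega⟩))
  have hpos : 0 < ∫ z, ‖q.eval z‖ ^ 2 ∂mCirc := by
    simpa only [v, sum_coeff_mul_pow hq] using integral_norm_sum_mul_pow_sq_mCirc_pos hv
  rw [← le_div_iff₀ hpos, smallestEig_momMat_eq h1]
  have hbdd : BddBelow (Set.range fun v : {v : Fin (n + 1) → ℂ // v ≠ 0} =>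
      (∫ z, ‖∑ i, v.1 i * z ^ (i : ℕ)‖ ^ 2 ∂ν) /
        ∫ z, ‖∑ i, v.1 i * z ^ (i : ℕ)‖ ^ 2 ∂mCirc) :=
    ⟨0, by rintro _ ⟨v, rfl⟩; positivity⟩
  simpa only [v, sum_coeff_mul_pow hq] using ciInf_le hbdd ⟨v, hv⟩

theorem inv_le_smallestEig_momMat (h1 : ∀ᵐ z ∂ν, ‖z‖ = 1) {c : ℝ} (hc : 0 < c)
    (hpoly : ∀ q : ℂ[X], ∫ z, ‖q.eval z‖ ^ 2 ∂mCirc ≤ c * ∫ z, ‖q.eval z‖ ^ 2 ∂ν) (n : ℕ) :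
    c⁻¹ ≤ smallestEig (momMat ν) n := by
  rw [smallestEig_momMat_eq h1]
  have : Nonempty {v : Fin (n + 1) → ℂ // v ≠ 0} := ⟨⟨1, one_ne_zero⟩⟩
  refine le_ciInf fun ⟨v, hv⟩ => ?_
  have hq := hpoly (∑ i, C (v i) * X ^ (i : ℕ))
  simp only [eval_finsetSum, eval_mul, eval_C, eval_pow, eval_X] at hq
  rwa [le_div_iff₀ (integral_norm_sum_mul_pow_sq_mCirc_pos hv), inv_mul_le_iff₀ hc]

theorem integral_norm_eval_sq_mCirc_le_of_tendsto (h1 : ∀ᵐ z ∂ν, ‖z‖ = 1) {lam : ℝ}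
    (hlam : Tendsto (smallestEig (momMat ν)) atTop (𝓝 lam)) (hpos : 0 < lam) (q : ℂ[X]) :
    ∫ z, ‖q.eval z‖ ^ 2 ∂mCirc ≤ lam⁻¹ * ∫ z, ‖q.eval z‖ ^ 2 ∂ν := by
  rw [le_inv_mul_iff₀ hpos]
  exact le_of_tendsto (hlam.mul_const _)
    (eventually_atTop.2 ⟨q.natDegree, fun _ hn => smallestEig_momMat_mul_le h1 hn⟩)

end SmallestEig

theorem pos_of_forall_integral_norm_eval_sq_le {μ ν : Measure ℂ} [IsProbabilityMeasure μ]
    {c : ℝ} (hc : ∀ q : ℂ[X], ∫ z, ‖q.eval z‖ ^ 2 ∂μ ≤ c * ∫ z, ‖q.eval z‖ ^ 2 ∂ν) : 0 < c := by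
  have h := hc 1
  simp only [eval_one, norm_one, one_pow, integral_const, probReal_univ, smul_eq_mul, mul_one] at h
  exact pos_of_mul_pos_left (one_pos.trans_le h) measureReal_nonneg

theorem memLp_and_integral_norm_sq_le_of_mem_polyClosure {μ ν : Measure ℂ} (hμν : μ ≪ ν)
    (hμ : ∀ q : ℂ[X], MemLp (fun z => q.eval z) 2 μ) {c : ℝ} (hc : 0 ≤ c)
    (hpoly : ∀ q : ℂ[X], ∫ z, ‖q.eval z‖ ^ 2 ∂μ ≤ c * ∫ z, ‖q.eval z‖ ^ 2 ∂ν)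
    {f : Lp ℂ 2 ν} (hf : f ∈ polyClosure ν) :
    MemLp f 2 μ ∧ ∫ z, ‖f z‖ ^ 2 ∂μ ≤ c * ∫ z, ‖f z‖ ^ 2 ∂ν := by
  have hf_le : eLpNorm f 2 μ ≤ ENNReal.ofReal √c * eLpNorm f 2 ν := by
    refine closure_minimal ?_
      (isClosed_setOf_eLpNorm_le_mul_eLpNorm hμν ENNReal.ofReal_ne_top) hf
    rintro g ⟨q, hq⟩
    rw [Set.mem_ofPred_eq, eLpNorm_congr_ae hq, eLpNorm_congr_ae (hμν.ae_le hq)]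
    exact (eLpNorm_two_le_ofReal_sqrt_mul_iff (hμ q) ((Lp.memLp g).ae_eq hq) hc).2 (hpoly q)
  have hfμ : MemLp f 2 μ := ⟨(Lp.aestronglyMeasurable f).mono_ac hμν,
    hf_le.trans_lt (ENNReal.mul_lt_top ENNReal.ofReal_lt_top (Lp.eLpNorm_lt_top f))⟩
  exact ⟨hfμ, (eLpNorm_two_le_ofReal_sqrt_mul_iff hfμ (Lp.memLp f) hc).1 hf_le⟩

theorem integral_norm_eval_sq_le_of_forall_mem_polyClosure {μ ν : Measure ℂ} (hμν : μ ≪ ν)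
    (hν : ∀ q : ℂ[X], MemLp (fun z => q.eval z) 2 ν) {c : ℝ}
    (hc : ∀ f ∈ polyClosure ν, ∫ z, ‖(f : ℂ → ℂ) z‖ ^ 2 ∂μ ≤ c * ∫ z, ‖(f : ℂ → ℂ) z‖ ^ 2 ∂ν)
    (q : ℂ[X]) : ∫ z, ‖q.eval z‖ ^ 2 ∂μ ≤ c * ∫ z, ‖q.eval z‖ ^ 2 ∂ν := by
  have hq := (hν q).coeFn_toLp
  have hqμ : _ =ᵐ[μ] _ := hμν.ae_le hq
  have h := hc _ (subset_closure ⟨q, hq⟩)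
  rwa [integral_congr_ae (hq.mono fun z hz => by rw [hz]),
    integral_congr_ae (hqμ.mono fun z hz => by rw [hz])] at h

theorem stmt14_general (ν : Measure ℂ) [IsFiniteMeasure ν]
    (hsupp : ν {z : ℂ | ‖z‖ ≠ 1} = 0)
    (hac : mCirc ≪ ν)
    (lam : ℝ) (hlam : Tendsto (smallestEig (momMat ν)) atTop (𝓝 lam)) :
    (0 < lam ↔
      (∀ f ∈ polyClosure ν, MemLp (f : ℂ → ℂ) 2 mCirc) ∧
      ∃ C : ℝ, ∀ f ∈ polyClosure ν,
        ∫ z, ‖(f : ℂ → ℂ) z‖ ^ 2 ∂mCirc ≤ C * ∫ z, ‖(f : ℂ → ℂ) z‖ ^ 2 ∂ν) ∧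
    (0 < lam →
      (∀ f ∈ polyClosure ν,
        ∫ z, ‖(f : ℂ → ℂ) z‖ ^ 2 ∂mCirc ≤ lam⁻¹ * ∫ z, ‖(f : ℂ → ℂ) z‖ ^ 2 ∂ν) ∧
      ∀ C : ℝ, (∀ f ∈ polyClosure ν,
        ∫ z, ‖(f : ℂ → ℂ) z‖ ^ 2 ∂mCirc ≤ C * ∫ z, ‖(f : ℂ → ℂ) z‖ ^ 2 ∂ν) →
          lam⁻¹ ≤ C) := by
  have h1 : ∀ᵐ z ∂ν, ‖z‖ = 1 := ae_iff.2 hsupp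
  have bound_of_pos (hpos : 0 < lam) {f : Lp ℂ 2 ν} (hf : f ∈ polyClosure ν) :=
    memLp_and_integral_norm_sq_le_of_mem_polyClosure hac
      (fun q => memLp_of_continuous_of_ae_norm_eq_one ae_norm_eq_one_mCirc q.continuous 2)
      (inv_nonneg.2 hpos.le) (integral_norm_eval_sq_mCirc_le_of_tendsto h1 hlam hpos) hf
  have inv_le_of_bound {C : ℝ} (hC : ∀ f ∈ polyClosure ν,
      ∫ z, ‖(f : ℂ → ℂ) z‖ ^ 2 ∂mCirc ≤ C * ∫ z, ‖(f : ℂ → ℂ) z‖ ^ 2 ∂ν) :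
      0 < C ∧ C⁻¹ ≤ lam := by
    have hpoly := integral_norm_eval_sq_le_of_forall_mem_polyClosure hac
      (fun q => memLp_of_continuous_of_ae_norm_eq_one h1 q.continuous 2) hC
    have hC0 := pos_of_forall_integral_norm_eval_sq_le hpoly
    exact ⟨hC0, ge_of_tendsto' hlam (inv_le_smallestEig_momMat h1 hC0 hpoly)⟩
  refine ⟨⟨fun hpos => ⟨fun f hf => (bound_of_pos hpos hf).1, lam⁻¹,
    fun f hf => (bound_of_pos hpos hf).2⟩, fun ⟨_, C, hC⟩ => ?_⟩,
    fun hpos => ⟨fun f hf => (bound_of_pos hpos hf).2, fun C hC => ?_⟩⟩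
  · obtain ⟨hC0, hle⟩ := inv_le_of_bound hC
    exact (inv_pos.2 hC0).trans_le hle
  · obtain ⟨hC0, hle⟩ := inv_le_of_bound hC
    exact inv_le_of_inv_le₀ hC0 hle

/-- for a measure `ν` on the unit circle with infinite support and
`m ≪ ν`, `lim λ_n(ν) = λ > 0` iff every `f ∈ P²(ν)` lies in `L²(m)` and the
identity map `P²(ν) → L²(m)` is bounded; in that case
`∫|f|² dm ≤ λ⁻¹ ∫|f|² dν` on `P²(ν)`, with `λ⁻¹` the optimal constant
(i.e. `‖I_ν‖ = λ^{-1/2}`). -/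
theorem stmt14 (ν : Measure ℂ) [IsFiniteMeasure ν]
    (hsupp : ν {z : ℂ | ‖z‖ ≠ 1} = 0)
    (hinf : ∀ s : Finset ℂ, ν ((s : Set ℂ))ᶜ ≠ 0)
    (hac : mCirc ≪ ν)
    (lam : ℝ) (hlam : Tendsto (smallestEig (momMat ν)) atTop (𝓝 lam)) :
    (0 < lam ↔
      (∀ f ∈ polyClosure ν, MemLp (f : ℂ → ℂ) 2 mCirc) ∧
      ∃ C : ℝ, ∀ f ∈ polyClosure ν,
        ∫ z, ‖(f : ℂ → ℂ) z‖ ^ 2 ∂mCirc ≤ C * ∫ z, ‖(f : ℂ → ℂ) z‖ ^ 2 ∂ν) ∧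
    (0 < lam →
      (∀ f ∈ polyClosure ν,
        ∫ z, ‖(f : ℂ → ℂ) z‖ ^ 2 ∂mCirc ≤ lam⁻¹ * ∫ z, ‖(f : ℂ → ℂ) z‖ ^ 2 ∂ν) ∧
      ∀ C : ℝ, (∀ f ∈ polyClosure ν,
        ∫ z, ‖(f : ℂ → ℂ) z‖ ^ 2 ∂mCirc ≤ C * ∫ z, ‖(f : ℂ → ℂ) z‖ ^ 2 ∂ν) →
          lam⁻¹ ≤ C) :=
  stmt14_general ν hsupp hac lam hlam
end
end
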